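/- Let G be a connected graph with n ≥ 2 vertices and m edges. For any new vertex i ∈ V′ and any original vertex j ∈ V, the resistance distance in the triangulation and that in the subdivision are related by Ω^T_{ij} = (1/3)·Ω^S_{ij} + 1/3. -/

import Mathlib

/-!
Order the vertices of `S(G)` and `T(G)` as `V ⊕ V′`. With `R` the vertex–edge incidence
matrix (so `R Rᵀ = D + A`), the Laplacians are the block matrices
`L_S = [[D, -R], [-Rᵀ, 2]]` and `L_T = [[2D - A, -R], [-Rᵀ, 2]]`. If `E` is the projection onto
the new coordinates, this reads `L_T = 3 L_S - L_S E L_S`, and `E L_S E = 2 E`; a short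
noncommutative computation then shows that `X = (L_S⁺ + E) / 3` is an inner inverse of `L_T`,
i.e. `L_T X L_T = L_T`. For a connected graph, `Ω_ij = (e_i - e_j)ᵀ X (e_i - e_j)` for every
inner inverse `X` of its Laplacian, because `e_i - e_j` lies in the range of `L`. For `i ∈ V′`
and `j ∈ V` the `E` term contributes exactly `1`.
-/

open BigOperators Matrix

namespace KirchhoffPaper

/-- `B` is a Moore–Penrose (pseudo)inverse of `A`. -/
def IsMoorePenrose {n : Type*} [Fintype n] [DecidableEq n] (A B : Matrix n n ℝ) : Prop :=
  A * B * A = A ∧ B * A * B = B ∧ (A * B)ᵀ = A * B ∧ (B * A)ᵀ = B * A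

variable {V : Type*}

/-- The resistance distance between `i` and `j` in `G`:
`Ω_{ij} = L⁺_{ii} + L⁺_{jj} - 2 L⁺_{ij}` with `L⁺` the Moore–Penrose inverse of the Laplacian. -/
noncomputable def resistanceDistance [Fintype V] [DecidableEq V]
    (G : SimpleGraph V) [DecidableRel G.Adj] (i j : V) : ℝ :=
  letI := Classical.propDecidable
  if h : ∃ B, IsMoorePenrose (G.lapMatrix ℝ) B then
    h.choose i i + h.choose j j - 2 * h.choose i j
  else 0

/-- Kirchhoff index `R(G) = Σ_{{i,j}⊆V} Ω_{ij}` (as half the sum over ordered pairs;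
note `Ω_{ii} = 0`). -/
noncomputable def kirchhoffIndex [Fintype V] [DecidableEq V]
    (G : SimpleGraph V) [DecidableRel G.Adj] : ℝ :=
  (1 / 2) * ∑ i, ∑ j, resistanceDistance G i j

/-- Additive degree-Kirchhoff index `R⁺(G) = Σ_{{i,j}⊆V} (d_i + d_j) Ω_{ij}`. -/
noncomputable def addDegKirchhoffIndex [Fintype V] [DecidableEq V]
    (G : SimpleGraph V) [DecidableRel G.Adj] : ℝ :=
  (1 / 2) * ∑ i, ∑ j, ((G.degree i : ℝ) + (G.degree j : ℝ)) * resistanceDistance G i j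

/-- Multiplicative degree-Kirchhoff index `R*(G) = Σ_{{i,j}⊆V} d_i d_j Ω_{ij}`. -/
noncomputable def mulDegKirchhoffIndex [Fintype V] [DecidableEq V]
    (G : SimpleGraph V) [DecidableRel G.Adj] : ℝ :=
  (1 / 2) * ∑ i, ∑ j, ((G.degree i : ℝ) * (G.degree j : ℝ)) * resistanceDistance G i j

/-- The subdivision `S(G)`: each edge of `G` is replaced by a path of length two through a
new vertex (one new vertex per edge of `G`). -/
def subdivision [DecidableEq V] (G : SimpleGraph V) : SimpleGraph (V ⊕ G.edgeSet) where
  Adj x y :=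
    match x, y with
    | Sum.inl u, Sum.inr e => u ∈ (e : Sym2 V)
    | Sum.inr e, Sum.inl u => u ∈ (e : Sym2 V)
    | _, _ => False
  symm := ⟨by rintro (u | e) (v | f) h <;> exact h⟩
  loopless := ⟨by rintro (u | e) h <;> exact h⟩

/-- The triangulation `T(G)`: each edge `uv` of `G` is turned into a triangle `uwv`
with `w` a new vertex associated with `uv`. -/
def triangulation [DecidableEq V] (G : SimpleGraph V) : SimpleGraph (V ⊕ G.edgeSet) where
  Adj x y :=
    match x, y with
    | Sum.inl u, Sum.inl v => G.Adj u v
    | Sum.inl u, Sum.inr e => u ∈ (e : Sym2 V)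
    | Sum.inr e, Sum.inl u => u ∈ (e : Sym2 V)
    | _, _ => False
  symm := ⟨by
    rintro (u | e) (v | f) h
    · exact G.symm.symm _ _ h
    · exact h
    · exact h
    · exact h⟩
  loopless := ⟨by
    rintro (u | e) h
    · exact G.loopless.irrefl u h
    · exact h⟩

instance [Fintype V] [DecidableEq V] (G : SimpleGraph V) [DecidableRel G.Adj] :
    DecidableRel (subdivision G).Adj := fun x y =>
  match x, y with
  | Sum.inl _, Sum.inl _ => inferInstanceAs (Decidable False)
  | Sum.inl u, Sum.inr e => inferInstanceAs (Decidable (u ∈ (e : Sym2 V)))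
  | Sum.inr e, Sum.inl u => inferInstanceAs (Decidable (u ∈ (e : Sym2 V)))
  | Sum.inr _, Sum.inr _ => inferInstanceAs (Decidable False)

instance [Fintype V] [DecidableEq V] (G : SimpleGraph V) [DecidableRel G.Adj] :
    DecidableRel (triangulation G).Adj := fun x y =>
  match x, y with
  | Sum.inl u, Sum.inl v => inferInstanceAs (Decidable (G.Adj u v))
  | Sum.inl u, Sum.inr e => inferInstanceAs (Decidable (u ∈ (e : Sym2 V)))
  | Sum.inr e, Sum.inl u => inferInstanceAs (Decidable (u ∈ (e : Sym2 V)))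
  | Sum.inr _, Sum.inr _ => inferInstanceAs (Decidable False)

/-- A bundled finite simple graph (with decidable adjacency), used for iterating
the subdivision and triangulation constructions. -/
structure FGraph where
  V : Type*
  [fV : Fintype V]
  [dV : DecidableEq V]
  G : SimpleGraph V
  [dG : DecidableRel G.Adj]

attribute [instance] FGraph.fV FGraph.dV FGraph.dG

/-- Subdivision, as an operation on bundled graphs. -/
def FGraph.subdiv (H : FGraph) : FGraph := { V := H.V ⊕ H.G.edgeSet, G := subdivision H.G }

/-- Triangulation, as an operation on bundled graphs. -/
def FGraph.triang (H : FGraph) : FGraph := { V := H.V ⊕ H.G.edgeSet, G := triangulation H.G }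

/-- Kirchhoff index of a bundled graph. -/
noncomputable def FGraph.R (H : FGraph) : ℝ := kirchhoffIndex H.G

/-- Additive degree-Kirchhoff index of a bundled graph. -/
noncomputable def FGraph.Rplus (H : FGraph) : ℝ := addDegKirchhoffIndex H.G

/-- Multiplicative degree-Kirchhoff index of a bundled graph. -/
noncomputable def FGraph.Rstar (H : FGraph) : ℝ := mulDegKirchhoffIndex H.G

theorem IsMoorePenrose.unique {W : Type*} [Fintype W] [DecidableEq W] {A B C : Matrix W W ℝ}
    (hB : IsMoorePenrose A B) (hC : IsMoorePenrose A C) : B = C := by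
  obtain ⟨hB₁, hB₂, hB₃, hB₄⟩ := hB
  obtain ⟨hC₁, hC₂, hC₃, hC₄⟩ := hC
  have hAB : A * B = A * C :=
    calc A * B = (A * C * (A * B))ᵀ := by rw [← Matrix.mul_assoc, hC₁, hB₃]
      _ = A * C := by rw [transpose_mul, hB₃, hC₃, ← Matrix.mul_assoc, hB₁]
  have hBA : B * A = C * A :=
    calc B * A = (B * A * (C * A))ᵀ := by
          rw [← Matrix.mul_assoc, Matrix.mul_assoc B, Matrix.mul_assoc B, hC₁, hB₄]
      _ = C * A := by
          rw [transpose_mul, hB₄, hC₄, Matrix.mul_assoc, ← Matrix.mul_assoc A, hB₁]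
  rw [← hB₂, Matrix.mul_assoc, hAB, ← Matrix.mul_assoc, hBA, hC₂]

theorem three_nsmul_sub_mul_add_mul_three_nsmul_sub {R : Type*} [Ring R] {S X E : R}
    (hX : S * X * S = S) (hE : E * S * E = 2 • E) :
    (3 • S - S * E * S) * (X + E) * (3 • S - S * E * S) = 3 • (3 • S - S * E * S) := by
  have hE_left : E * (3 - S * E) = E := by
    rw [mul_sub, ← mul_assoc, hE]
    noncomm_ring
  have hE_right : (3 - E * S) * E = E := by
    rw [sub_mul, hE]
    noncomm_ring
  calc (3 • S - S * E * S) * (X + E) * (3 • S - S * E * S)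
      = (3 - S * E) * (S * X * S) * (3 - E * S) + S * ((3 - E * S) * E * (3 - S * E)) * S := by
        noncomm_ring
    _ = 9 • S - 6 • (S * E * S) + S * (E * S * E) * S + S * E * S := by
        rw [hX, hE_right, hE_left]
        noncomm_ring
    _ = 3 • (3 • S - S * E * S) := by
        rw [hE]
        noncomm_ring

section Laplacian

variable {W : Type*} [Fintype W]

theorem adjMatrix_mulVec_one (H : SimpleGraph W) [DecidableRel H.Adj] :
    H.adjMatrix ℝ *ᵥ 1 = fun v => (H.degree v : ℝ) := by
  ext v
  simp

noncomputable def meanProj (W : Type*) [Fintype W] : Matrix W W ℝ :=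
  of fun _ _ => (Fintype.card W : ℝ)⁻¹

theorem meanProj_transpose : (meanProj W)ᵀ = meanProj W := rfl

theorem meanProj_mul_self [Nonempty W] : meanProj W * meanProj W = meanProj W := by
  ext i j
  simp [meanProj, mul_apply]

theorem meanProj_mulVec_of_sum_eq_zero {v : W → ℝ} (hv : ∑ i, v i = 0) :
    meanProj W *ᵥ v = 0 := by
  ext i
  simp [meanProj, mulVec, dotProduct, ← Finset.mul_sum, hv]

variable [DecidableEq W] (H : SimpleGraph W) [DecidableRel H.Adj]

theorem lapMatrix_eq_diagonal_sub :
    H.lapMatrix ℝ = diagonal (H.adjMatrix ℝ *ᵥ 1) - H.adjMatrix ℝ := by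
  rw [adjMatrix_mulVec_one]
  rfl

theorem lapMatrix_mul_meanProj : H.lapMatrix ℝ * meanProj W = 0 := by
  ext i j
  have := congrFun (H.lapMatrix_mulVec_const_eq_zero (R := ℝ)) i
  simp only [mulVec, dotProduct, mul_one, Pi.zero_apply] at this
  simp [meanProj, mul_apply, ← Finset.sum_mul, this]

theorem meanProj_mul_lapMatrix : meanProj W * H.lapMatrix ℝ = 0 := by
  rw [← transpose_transpose (meanProj W * _), transpose_mul, meanProj_transpose,
    (H.isSymm_lapMatrix ℝ).eq, lapMatrix_mul_meanProj, transpose_zero]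

noncomputable def regularizedLap : Matrix W W ℝ := H.lapMatrix ℝ + meanProj W

theorem regularizedLap_transpose : (regularizedLap H)ᵀ = regularizedLap H := by
  rw [regularizedLap, transpose_add, (H.isSymm_lapMatrix ℝ).eq, meanProj_transpose]

theorem meanProj_mul_regularizedLap [Nonempty W] :
    meanProj W * regularizedLap H = meanProj W := by
  rw [regularizedLap, Matrix.mul_add, meanProj_mul_lapMatrix, meanProj_mul_self, zero_add]

variable {H}

theorem isUnit_det_regularizedLap (hH : H.Connected) : IsUnit (regularizedLap H).det := by
  have := hH.nonempty
  rw [isUnit_iff_ne_zero, Ne, ← exists_mulVec_eq_zero_iff]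
  rintro ⟨x, hx0, hx⟩
  have hKx : meanProj W *ᵥ x = 0 := by
    rw [← meanProj_mul_regularizedLap H, ← mulVec_mulVec, hx, mulVec_zero]
  have hLx : H.lapMatrix ℝ *ᵥ x = 0 := by
    simpa only [regularizedLap, add_mulVec, hKx, add_zero] using hx
  have hconst (i j : W) : x i = x j :=
    H.lapMatrix_mulVec_eq_zero_iff_forall_reachable.1 hLx i j (hH.preconnected i j)
  refine hx0 (funext fun i => ?_)
  have := congrFun hKx i
  simp only [meanProj, mulVec, dotProduct, of_apply, Pi.zero_apply, hconst _ i,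
    ← Finset.mul_sum, Finset.sum_const, Finset.card_univ, nsmul_eq_mul] at this
  simpa [Fintype.card_ne_zero] using this

theorem meanProj_mul_inv_regularizedLap (hH : H.Connected) :
    meanProj W * (regularizedLap H)⁻¹ = meanProj W := by
  have := hH.nonempty
  simpa only [meanProj_mul_regularizedLap] using
    mul_nonsing_inv_cancel_right _ (meanProj W) (isUnit_det_regularizedLap hH)

variable (H) in
noncomputable def lapPinv : Matrix W W ℝ := (regularizedLap H)⁻¹ - meanProj W

theorem lapPinv_transpose : (lapPinv H)ᵀ = lapPinv H := by
  rw [lapPinv, transpose_sub, transpose_nonsing_inv, regularizedLap_transpose, meanProj_transpose]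

theorem lapMatrix_mul_lapPinv (hH : H.Connected) :
    H.lapMatrix ℝ * lapPinv H = 1 - meanProj W := by
  rw [lapPinv, Matrix.mul_sub, lapMatrix_mul_meanProj, sub_zero,
    show H.lapMatrix ℝ = regularizedLap H - meanProj W from (add_sub_cancel_right _ _).symm,
    Matrix.sub_mul, mul_nonsing_inv _ (isUnit_det_regularizedLap hH),
    meanProj_mul_inv_regularizedLap hH]

theorem lapPinv_mul_lapMatrix (hH : H.Connected) :
    lapPinv H * H.lapMatrix ℝ = 1 - meanProj W := by
  rw [← transpose_transpose (lapPinv H * _), transpose_mul, lapPinv_transpose,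
    (H.isSymm_lapMatrix ℝ).eq, lapMatrix_mul_lapPinv hH, transpose_sub, transpose_one,
    meanProj_transpose]

theorem meanProj_mul_lapPinv (hH : H.Connected) : meanProj W * lapPinv H = 0 := by
  have := hH.nonempty
  rw [lapPinv, Matrix.mul_sub, meanProj_mul_inv_regularizedLap hH, meanProj_mul_self, sub_self]

theorem isMoorePenrose_lapPinv (hH : H.Connected) :
    IsMoorePenrose (H.lapMatrix ℝ) (lapPinv H) := by
  refine ⟨?_, ?_, ?_, ?_⟩
  · rw [lapMatrix_mul_lapPinv hH, Matrix.sub_mul, Matrix.one_mul, meanProj_mul_lapMatrix,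
      sub_zero]
  · rw [lapPinv_mul_lapMatrix hH, Matrix.sub_mul, Matrix.one_mul, meanProj_mul_lapPinv hH,
      sub_zero]
  · rw [lapMatrix_mul_lapPinv hH, transpose_sub, transpose_one, meanProj_transpose]
  · rw [lapPinv_mul_lapMatrix hH, transpose_sub, transpose_one, meanProj_transpose]

theorem one_sub_meanProj_mul_mul_eq_lapPinv (hH : H.Connected) {X : Matrix W W ℝ}
    (hX : H.lapMatrix ℝ * X * H.lapMatrix ℝ = H.lapMatrix ℝ) :
    (1 - meanProj W) * X * (1 - meanProj W) = lapPinv H := by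
  calc (1 - meanProj W) * X * (1 - meanProj W)
      = lapPinv H * H.lapMatrix ℝ * X * (H.lapMatrix ℝ * lapPinv H) := by
        rw [lapPinv_mul_lapMatrix hH, lapMatrix_mul_lapPinv hH]
    _ = lapPinv H * (H.lapMatrix ℝ * X * H.lapMatrix ℝ) * lapPinv H := by
        simp only [Matrix.mul_assoc]
    _ = lapPinv H := by rw [hX, (isMoorePenrose_lapPinv hH).2.1]

theorem resistanceDistance_eq_of_isMoorePenrose {B : Matrix W W ℝ}
    (hB : IsMoorePenrose (H.lapMatrix ℝ) B) (i j : W) :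
    resistanceDistance H i j = B i i + B j j - 2 * B i j := by
  -- `resistanceDistance` is stated with classical decidability instances
  obtain rfl : ‹DecidableEq W› = fun a b => Classical.propDecidable (a = b) :=
    Subsingleton.elim _ _
  obtain rfl : ‹DecidableRel H.Adj› = fun a b => Classical.propDecidable (H.Adj a b) :=
    Subsingleton.elim _ _
  classical
  rw [resistanceDistance, dif_pos ⟨B, hB⟩, IsMoorePenrose.unique (Exists.choose_spec _) hB]

theorem resistanceDistance_eq_of_lapMatrix_mul_mul_eq (hH : H.Connected) {X : Matrix W W ℝ}
    (hX : H.lapMatrix ℝ * X * H.lapMatrix ℝ = H.lapMatrix ℝ) (i j : W) :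
    resistanceDistance H i j = X i i + X j j - X i j - X j i := by
  set v : W → ℝ := Pi.single i 1 - Pi.single j 1
  have quad (Y : Matrix W W ℝ) : v ⬝ᵥ (Y *ᵥ v) = Y i i + Y j j - Y i j - Y j i := by
    simp only [v, mulVec_sub, dotProduct_sub, sub_dotProduct, mulVec_single_one,
      single_one_dotProduct, col_apply]
    ring
  have hv : (1 - meanProj W) *ᵥ v = v := by
    rw [sub_mulVec, one_mulVec, meanProj_mulVec_of_sum_eq_zero (by simp [v]), sub_zero]
  have hv' : v ᵥ* (1 - meanProj W) = v := by
    rw [← mulVec_transpose, transpose_sub, transpose_one, meanProj_transpose, hv]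
  have hP : lapPinv H j i = lapPinv H i j := by
    rw [← transpose_apply (lapPinv H), lapPinv_transpose]
  calc resistanceDistance H i j = v ⬝ᵥ (lapPinv H *ᵥ v) := by
        rw [resistanceDistance_eq_of_isMoorePenrose (isMoorePenrose_lapPinv hH), quad, hP]
        ring
    _ = v ⬝ᵥ (X *ᵥ v) := by
        rw [← one_sub_meanProj_mul_mul_eq_lapPinv hH hX, ← mulVec_mulVec, ← mulVec_mulVec,
          dotProduct_mulVec, hv, hv']
    _ = X i i + X j j - X i j - X j i := quad X

end Laplacian

section Graph

variable [DecidableEq V] (G : SimpleGraph V)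

theorem subdivision_le_triangulation : subdivision G ≤ triangulation G := by
  rintro (u | e) (v | f) h <;> simp_all [subdivision, triangulation]

variable {G}

theorem reachable_subdivision_inl {u v : V} (h : G.Reachable u v) :
    (subdivision G).Reachable (Sum.inl u) (Sum.inl v) := by
  obtain ⟨w⟩ := h
  induction w with
  | nil => rfl
  | @cons a b _ hab _ ih =>
    have ha : (subdivision G).Adj (Sum.inl a) (Sum.inr ⟨s(a, b), hab⟩) := Sym2.mem_mk_left a b
    have hb : (subdivision G).Adj (Sum.inr ⟨s(a, b), hab⟩) (Sum.inl b) := Sym2.mem_mk_right a b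
    exact ha.reachable.trans (hb.reachable.trans ih)

theorem connected_subdivision (hG : G.Connected) : (subdivision G).Connected := by
  obtain ⟨v₀⟩ := hG.nonempty
  have hreach : ∀ x, (subdivision G).Reachable x (Sum.inl v₀)
    | Sum.inl u => reachable_subdivision_inl (hG.preconnected u v₀)
    | Sum.inr e => by
      have he : (subdivision G).Adj (Sum.inr e) (Sum.inl (e : Sym2 V).out.1) := Sym2.out_fst_mem _
      exact he.reachable.trans (reachable_subdivision_inl (hG.preconnected _ v₀))
  exact (SimpleGraph.connected_iff _).2
    ⟨fun x y => (hreach x).trans (hreach y).symm, ⟨Sum.inl v₀⟩⟩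

theorem connected_triangulation (hG : G.Connected) : (triangulation G).Connected :=
  (connected_subdivision hG).mono (subdivision_le_triangulation G)

end Graph

section Incidence

variable [DecidableEq V] (G : SimpleGraph V) [DecidableRel G.Adj]

noncomputable def edgeIncidence : Matrix V G.edgeSet ℝ := (G.incMatrix ℝ).submatrix id (↑)

theorem edgeIncidence_apply (u : V) (e : G.edgeSet) :
    edgeIncidence G u e = if u ∈ (e : Sym2 V) then 1 else 0 := by
  simp [edgeIncidence, SimpleGraph.incMatrix_apply', SimpleGraph.incidenceSet, e.2]

variable [Fintype V]

theorem sum_incMatrix_mul_edgeSet (u : V) (f : Sym2 V → ℝ) :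
    ∑ e : G.edgeSet, G.incMatrix ℝ u e * f e = ∑ e, G.incMatrix ℝ u e * f e :=
  (Finset.sum_congr_set _ _ _ (fun _ _ => rfl) fun _ he => by
    rw [G.incMatrix_of_notMem_incidenceSet fun h => he h.1, zero_mul]).symm

theorem edgeIncidence_mul_transpose :
    edgeIncidence G * (edgeIncidence G)ᵀ = G.degMatrix ℝ + G.adjMatrix ℝ := by
  ext u v
  have := congrFun (congrFun (G.incMatrix_mul_transpose (R := ℝ)) u) v
  simp only [mul_apply, transpose_apply] at this
  rw [mul_apply]
  simp only [edgeIncidence, submatrix_apply, id, transpose_apply]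
  rw [sum_incMatrix_mul_edgeSet G u (G.incMatrix ℝ v), this]
  by_cases h : u = v
  · subst h; simp [SimpleGraph.degMatrix]
  · by_cases ha : G.Adj u v <;> simp [SimpleGraph.degMatrix, h, ha]

theorem edgeIncidence_mulVec_one : edgeIncidence G *ᵥ 1 = fun u => (G.degree u : ℝ) := by
  ext u
  have := sum_incMatrix_mul_edgeSet G u 1
  simp only [Pi.one_apply, mul_one] at this
  simp [mulVec, dotProduct, edgeIncidence, this, G.sum_incMatrix_apply]

theorem edgeIncidence_transpose_mulVec_one : (edgeIncidence G)ᵀ *ᵥ 1 = 2 := by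
  ext e
  simpa [mulVec, dotProduct, edgeIncidence] using
    G.sum_incMatrix_apply_of_mem_edgeSet (R := ℝ) e.2

end Incidence

section Blocks

variable [Fintype V] [DecidableEq V] (G : SimpleGraph V) [DecidableRel G.Adj]

theorem adjMatrix_subdivision :
    (subdivision G).adjMatrix ℝ = fromBlocks 0 (edgeIncidence G) (edgeIncidence G)ᵀ 0 := by
  ext (u | e) (v | f) <;> rw [SimpleGraph.adjMatrix_apply] <;>
    simp [subdivision, edgeIncidence_apply] <;> congr!

theorem adjMatrix_triangulation :
    (triangulation G).adjMatrix ℝ =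
      fromBlocks (G.adjMatrix ℝ) (edgeIncidence G) (edgeIncidence G)ᵀ 0 := by
  ext (u | e) (v | f) <;> rw [SimpleGraph.adjMatrix_apply] <;>
    simp [triangulation, edgeIncidence_apply] <;> congr!

theorem lapMatrix_subdivision :
    (subdivision G).lapMatrix ℝ =
      fromBlocks (G.degMatrix ℝ) (-edgeIncidence G) (-(edgeIncidence G)ᵀ) 2 := by
  rw [lapMatrix_eq_diagonal_sub, adjMatrix_subdivision, fromBlocks_mulVec]
  simp only [Pi.one_comp, zero_mulVec, zero_add, add_zero, edgeIncidence_mulVec_one,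
    edgeIncidence_transpose_mulVec_one]
  rw [← fromBlocks_diagonal, sub_eq_add_neg, fromBlocks_neg, fromBlocks_add]
  simp [SimpleGraph.degMatrix]

theorem lapMatrix_triangulation :
    (triangulation G).lapMatrix ℝ =
      fromBlocks (2 • G.degMatrix ℝ - G.adjMatrix ℝ) (-edgeIncidence G)
        (-(edgeIncidence G)ᵀ) 2 := by
  rw [lapMatrix_eq_diagonal_sub, adjMatrix_triangulation, fromBlocks_mulVec]
  simp only [Pi.one_comp, zero_mulVec, add_zero, adjMatrix_mulVec_one, edgeIncidence_mulVec_one,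
    edgeIncidence_transpose_mulVec_one]
  rw [← fromBlocks_diagonal, sub_eq_add_neg, fromBlocks_neg, fromBlocks_add]
  simp [SimpleGraph.degMatrix, sub_eq_add_neg, two_mul, diagonal_add]

noncomputable def newVertexProj : Matrix (V ⊕ G.edgeSet) (V ⊕ G.edgeSet) ℝ :=
  fromBlocks 0 0 0 1

theorem newVertexProj_mul_lapMatrix_subdivision_mul :
    newVertexProj G * (subdivision G).lapMatrix ℝ * newVertexProj G = 2 • newVertexProj G := by
  rw [lapMatrix_subdivision, newVertexProj, fromBlocks_multiply, fromBlocks_multiply,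
    fromBlocks_smul]
  simp

theorem lapMatrix_triangulation_eq :
    (triangulation G).lapMatrix ℝ = 3 • (subdivision G).lapMatrix ℝ -
      (subdivision G).lapMatrix ℝ * newVertexProj G * (subdivision G).lapMatrix ℝ := by
  rw [lapMatrix_triangulation, lapMatrix_subdivision, newVertexProj, fromBlocks_multiply,
    fromBlocks_multiply, fromBlocks_smul, sub_eq_add_neg (fromBlocks _ _ _ _), fromBlocks_neg,
    fromBlocks_add]
  simp only [Matrix.mul_zero, Matrix.mul_one, Matrix.zero_mul, zero_add, add_zero,
    Matrix.mul_neg, Matrix.neg_mul, edgeIncidence_mul_transpose, fromBlocks_inj]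
  refine ⟨by noncomm_ring, ?_, ?_, by norm_num⟩ <;> ext <;>
    simp [mul_apply, ofNat_apply] <;> ring

theorem lapMatrix_triangulation_mul_mul_eq {X : Matrix (V ⊕ G.edgeSet) (V ⊕ G.edgeSet) ℝ}
    (hX : (subdivision G).lapMatrix ℝ * X * (subdivision G).lapMatrix ℝ =
      (subdivision G).lapMatrix ℝ) :
    (triangulation G).lapMatrix ℝ * ((3 : ℝ)⁻¹ • (X + newVertexProj G)) *
      (triangulation G).lapMatrix ℝ = (triangulation G).lapMatrix ℝ := by
  rw [Matrix.mul_smul, Matrix.smul_mul, lapMatrix_triangulation_eq,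
    three_nsmul_sub_mul_add_mul_three_nsmul_sub hX (newVertexProj_mul_lapMatrix_subdivision_mul G),
    ← Nat.cast_smul_eq_nsmul ℝ, smul_smul]
  norm_num

end Blocks

theorem statement_13_general {V : Type*} [Fintype V] [DecidableEq V]
    (G : SimpleGraph V) [DecidableRel G.Adj]
    (hconn : G.Connected) :
    ∀ (i : G.edgeSet) (j : V),
      resistanceDistance (triangulation G) (Sum.inr i) (Sum.inl j) =
        (1 / 3) * resistanceDistance (subdivision G) (Sum.inr i) (Sum.inl j) + 1 / 3 := by
  intro i j
  have hS := connected_subdivision hconn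
  have hX := (isMoorePenrose_lapPinv hS).1
  rw [resistanceDistance_eq_of_lapMatrix_mul_mul_eq (connected_triangulation hconn)
      (lapMatrix_triangulation_mul_mul_eq G hX),
    resistanceDistance_eq_of_lapMatrix_mul_mul_eq hS hX]
  simp [newVertexProj]
  ring

theorem statement_13 {V : Type*} [Fintype V] [DecidableEq V]
    (G : SimpleGraph V) [DecidableRel G.Adj] (n m : ℕ)
    (hn : Fintype.card V = n) (hm : G.edgeFinset.card = m)
    (hconn : G.Connected) (hn2 : 2 ≤ n) :
    ∀ (i : G.edgeSet) (j : V),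
      resistanceDistance (triangulation G) (Sum.inr i) (Sum.inl j) =
        (1 / 3) * resistanceDistance (subdivision G) (Sum.inr i) (Sum.inl j) + 1 / 3 :=
  statement_13_general G hconn

end KirchhoffPaper
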